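/- arXiv:1907.04220 — 3 statements merged into one kernel-verified Lean document; each statement's English description precedes it below -/
import Mathlib

section
/- Fix a positive integer m, positive reals r_1,…,r_m, and let r = max_j r_j. Then for every ε > 0 there exist μ_1,…,μ_m > 0 and σ_j = r_j·μ_j such that for every truthful mechanism (x,π) for m items there exists a product Borel probability distribution F = F_1 × ⋯ × F_m on [0,∞)^m, whose j-th marginal F_j has mean μ_j and variance at most σ_j², satisfying OPT_m(F) ≥ (1 − ε + ln(1+r²)) · E_{v∼F}[π(v)]. -/
open MeasureTheory

/-- Revenue of posting price `p` against valuation distribution `F`: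
`REV(p;F) = p · P(X ≥ p)`. -/
noncomputable def rev (F : Measure ℝ) (p : ℝ) : ℝ :=
  p * (F (Set.Ici p)).toReal

/-- Optimal revenue `OPT(F) = sup_{p ≥ 0} p · P(X ≥ p)`. -/
noncomputable def opt (F : Measure ℝ) : ℝ :=
  ⨆ p ∈ Set.Ici (0 : ℝ), rev F p

/-- Revenue of a randomized pricing mechanism `A` (a measure over prices):
`REV(A;F) = E_{p∼A}[REV(p;F)]`. -/
noncomputable def mrev (A F : Measure ℝ) : ℝ :=
  ∫ p, rev F p ∂A

/-- `F` is a `(μ,σ)`-distributed distribution: a probability measure on `[0,∞)`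
with mean `m` and variance at most `s²`. -/
structure MeanVarLe (F : Measure ℝ) (m s : ℝ) : Prop where
  prob : IsProbabilityMeasure F
  supp : F (Set.Iio 0) = 0
  int_mean : Integrable (fun x => x) F
  int_sq : Integrable (fun x => x ^ 2) F
  mean : ∫ x, x ∂F = m
  var_le : ∫ x, (x - m) ^ 2 ∂F ≤ s ^ 2

/-- A randomized pricing mechanism: a probability measure over prices in `[0,∞)`. -/
def IsPriceMech (A : Measure ℝ) : Prop :=
  IsProbabilityMeasure A ∧ A (Set.Iio 0) = 0

/-- A (direct revelation, possibly randomized) truthful selling mechanism for `m` items and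
a single additive buyer: an allocation rule `alloc : [0,∞)^m → [0,1]^m` and a payment rule
`pay : [0,∞)^m → [0,∞)` satisfying incentive compatibility and individual rationality. -/
structure TruthfulMech (m : ℕ) where
  alloc : (Fin m → ℝ) → Fin m → ℝ
  pay : (Fin m → ℝ) → ℝ
  alloc_meas : Measurable alloc
  pay_meas : Measurable pay
  alloc_nonneg : ∀ v i, 0 ≤ alloc v i
  alloc_le_one : ∀ v i, alloc v i ≤ 1
  pay_nonneg : ∀ v, 0 ≤ pay v
  ic : ∀ v w : Fin m → ℝ, (∀ i, 0 ≤ v i) → (∀ i, 0 ≤ w i) →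
    (∑ i, alloc w i * v i) - pay w ≤ (∑ i, alloc v i * v i) - pay v
  ir : ∀ v : Fin m → ℝ, (∀ i, 0 ≤ v i) → 0 ≤ (∑ i, alloc v i * v i) - pay v

/-- Expected revenue of a truthful `m`-item mechanism on the joint distribution `F`. -/
noncomputable def mrevM {m : ℕ} (M : TruthfulMech m) (F : Measure (Fin m → ℝ)) : ℝ :=
  ∫ v, M.pay v ∂F

/-- Optimal revenue `OPT_m(F)`: the supremum of expected revenue over all truthful
mechanisms for `m` items. -/
noncomputable def optM (m : ℕ) (F : Measure (Fin m → ℝ)) : ℝ :=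
  ⨆ M : TruthfulMech m, mrevM M F

/-!
Concentrate the instance on one item `j` with `r j = rmax`: every other item is a point mass at
a tiny value `δ`, and item `j` gets `twoPoint τ` (value `τ` with probability `1/τ`, else `0`),
of mean `1` and variance `τ - 1 ≤ rmax²` whenever `τ ≤ B = 1 + rmax²`. Posting price `τ` on
item `j` earns exactly `1`. Along the line `s ↦ update y j s` the buyer's utility `u` has
subgradient `x ≤ 1` (truthfulness), so if on the geometric grid `1, ρ, …, ρⁿ = B` the payment
`x t * t - u t` always exceeded `β t`, then `u t / t` would gain `β (1 - ρ⁻¹)` per step, forcing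
`β (1 + n (1 - ρ⁻¹)) < 1`. As `n (1 - ρ⁻¹) → log B`, some grid point `τ` leaves the mechanism a
revenue of at most about `1 / (1 + log B)`.
-/

open Function ENNReal

noncomputable def twoPoint (τ : ℝ) : Measure ℝ :=
  ENNReal.ofReal τ⁻¹ • Measure.dirac τ + ENNReal.ofReal (1 - τ⁻¹) • Measure.dirac 0

section TwoPoint

variable {τ : ℝ}

lemma integrable_twoPoint (f : ℝ → ℝ) : Integrable f (twoPoint τ) :=
  ((integrable_dirac enorm_lt_top).smul_measure ofReal_ne_top).add_measure
    ((integrable_dirac enorm_lt_top).smul_measure ofReal_ne_top)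

lemma integral_twoPoint (hτ : 1 ≤ τ) (f : ℝ → ℝ) :
    ∫ x, f x ∂twoPoint τ = τ⁻¹ * f τ + (1 - τ⁻¹) * f 0 := by
  have hinv : τ⁻¹ ≤ 1 := inv_le_one_of_one_le₀ hτ
  rw [twoPoint, integral_add_measure, integral_smul_measure, integral_smul_measure,
    integral_dirac, integral_dirac, toReal_ofReal (by positivity),
    toReal_ofReal (by linarith), smul_eq_mul, smul_eq_mul]
  all_goals exact (integrable_dirac enorm_lt_top).smul_measure ofReal_ne_top

lemma isProbabilityMeasure_twoPoint (hτ : 1 ≤ τ) : IsProbabilityMeasure (twoPoint τ) := by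
  have hinv : τ⁻¹ ≤ 1 := inv_le_one_of_one_le₀ hτ
  constructor
  simp only [twoPoint, Measure.add_apply, Measure.smul_apply, measure_univ, smul_eq_mul,
    mul_one]
  rw [← ofReal_add (by positivity) (by linarith), add_sub_cancel, ofReal_one]

lemma meanVarLe_twoPoint (hτ : 1 ≤ τ) {s : ℝ} (hs : τ - 1 ≤ s ^ 2) :
    MeanVarLe (twoPoint τ) 1 s where
  prob := isProbabilityMeasure_twoPoint hτ
  supp := by simp [twoPoint, (by linarith : ¬τ < 0)]
  int_mean := integrable_twoPoint _
  int_sq := integrable_twoPoint _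
  mean := by
    rw [integral_twoPoint hτ, inv_mul_cancel₀ (by positivity)]
    ring
  var_le := by
    rw [integral_twoPoint hτ]
    convert hs using 1
    field_simp
    ring

end TwoPoint

lemma meanVarLe_dirac {δ : ℝ} (hδ : 0 ≤ δ) (s : ℝ) : MeanVarLe (Measure.dirac δ) δ s where
  prob := inferInstance
  supp := by simp [hδ.not_gt]
  int_mean := integrable_dirac enorm_lt_top
  int_sq := integrable_dirac enorm_lt_top
  mean := integral_dirac _ _
  var_le := by simp [sq_nonneg]

lemma meanVarLe_update_twoPoint {ι : Type*} [DecidableEq ι] {r : ι → ℝ} {j : ι} {δ τ : ℝ}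
    (hδ : 0 ≤ δ) (hτ : 1 ≤ τ) (hτr : τ - 1 ≤ r j ^ 2) (i : ι) :
    MeanVarLe (update (fun _ => Measure.dirac δ) j (twoPoint τ) i) (update (fun _ => δ) j 1 i)
      (r i * update (fun _ => δ) j 1 i) := by
  rcases eq_or_ne i j with rfl | hi
  · simp only [update_self, mul_one]
    exact meanVarLe_twoPoint hτ hτr
  · simp only [update_of_ne hi]
    exact meanVarLe_dirac hδ _

lemma pi_update_dirac_eq_map {ι α : Type*} [Fintype ι] [DecidableEq ι] [MeasurableSpace α]
    (y : ι → α) (j : ι) (μ : Measure α) [SigmaFinite μ] :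
    Measure.pi (update (fun i => Measure.dirac (y i)) j μ) = μ.map (update y j) := by
  have : ∀ i, SigmaFinite (update (fun i => Measure.dirac (y i)) j μ i) := by
    intro i
    rcases eq_or_ne i j with rfl | hi
    · rwa [update_self]
    · rw [update_of_ne hi]; infer_instance
  refine Measure.pi_eq fun s hs => ?_
  rw [Measure.map_apply (measurable_update y) (MeasurableSet.univ_pi hs),
    ← Finset.mul_prod_erase _ _ (Finset.mem_univ j), update_self]
  by_cases hy : ∀ i ≠ j, y i ∈ s i
  · rw [Set.update_preimage_univ_pi hy, Finset.prod_eq_one, mul_one]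
    intro i hi
    rw [update_of_ne (Finset.ne_of_mem_erase hi), Measure.dirac_apply_of_mem (hy i _)]
    exact Finset.ne_of_mem_erase hi
  · obtain ⟨i, hij, hi⟩ : ∃ i ≠ j, y i ∉ s i := by simpa using hy
    have hempty : update y j ⁻¹' Set.univ.pi s = ∅ := by
      ext t
      simp only [Set.mem_preimage, Set.mem_univ_pi, Set.mem_empty_iff_false, iff_false,
        not_forall]
      exact ⟨i, by rwa [update_of_ne hij]⟩
    rw [hempty, measure_empty, Finset.prod_eq_zero (Finset.mem_erase.2 ⟨hij, Finset.mem_univ i⟩),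
      mul_zero]
    rw [update_of_ne hij, Measure.dirac_apply' _ (hs i), Set.indicator_of_notMem hi]

lemma integral_pi_update_twoPoint {ι : Type*} [Fintype ι] [DecidableEq ι] (y : ι → ℝ) (j : ι)
    {τ : ℝ} (hτ : 1 ≤ τ) {f : (ι → ℝ) → ℝ} (hf : Measurable f) :
    ∫ v, f v ∂Measure.pi (update (fun i => Measure.dirac (y i)) j (twoPoint τ)) =
      τ⁻¹ * f (update y j τ) + (1 - τ⁻¹) * f (update y j 0) := by
  have := isProbabilityMeasure_twoPoint hτ
  rw [pi_update_dirac_eq_map, integral_map (measurable_update y).aemeasurable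
    hf.aestronglyMeasurable, integral_twoPoint hτ]

lemma Fintype.sum_mul_update {ι : Type*} [Fintype ι] [DecidableEq ι] (a y : ι → ℝ) (j : ι)
    (s : ℝ) : ∑ i, a i * update y j s i = ∑ i, a i * y i + a j * (s - y j) := by
  simp only [← Finset.sum_erase_add _ _ (Finset.mem_univ j), update_self]
  rw [Finset.sum_congr rfl fun i hi => by rw [update_of_ne (Finset.ne_of_mem_erase hi)]]
  ring

lemma update_nonneg {ι : Type*} [DecidableEq ι] {y : ι → ℝ} (hy : ∀ i, 0 ≤ y i) (j : ι)
    {t : ℝ} (ht : 0 ≤ t) : ∀ i, 0 ≤ update y j t i :=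
  (forall_update_iff y fun _ c => 0 ≤ c).2 ⟨ht, fun i _ => hy i⟩

lemma div_add_le_div_of_subgradient {s s' us us' xs β : ℝ} (hs : 0 < s) (hss' : s ≤ s')
    (hpay : β * s < xs * s - us) (hsub : us + xs * (s' - s) ≤ us') :
    us / s + β * (1 - s / s') ≤ us' / s' := by
  have hxs : β + us / s < xs := by
    refine lt_of_mul_lt_mul_right ?_ hs.le
    rw [add_mul, div_mul_cancel₀ _ hs.ne']
    linarith
  have hs' : 0 < s' := hs.trans_le hss'
  rw [le_div_iff₀ hs']
  calc (us / s + β * (1 - s / s')) * s' = us + (β + us / s) * (s' - s) := by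
        field_simp
        ring
    _ ≤ us + xs * (s' - s) := by gcongr
    _ ≤ us' := hsub

lemma exists_mul_sub_le_of_subgradient {x u : ℝ → ℝ} {ρ β : ℝ} (n : ℕ) (hρ : 1 ≤ ρ)
    (hx : x (ρ ^ n) ≤ 1) (hu : 0 ≤ u 1)
    (hsub : ∀ s s', 1 ≤ s → s ≤ s' → u s + x s * (s' - s) ≤ u s')
    (hβ : 1 ≤ β * (1 + n * (1 - ρ⁻¹))) :
    ∃ t ∈ Set.Icc 1 (ρ ^ n), x t * t - u t ≤ β * t := by
  by_contra! hpay
  have hgrid : ∀ k ≤ n, ρ ^ k ∈ Set.Icc 1 (ρ ^ n) := fun k hk =>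
    ⟨one_le_pow₀ hρ, pow_le_pow_right₀ hρ hk⟩
  have hgrowth : ∀ k ≤ n, k * (β * (1 - ρ⁻¹)) ≤ u (ρ ^ k) / ρ ^ k := by
    intro k
    induction k with
    | zero => simpa using hu
    | succ k ih =>
      intro hk
      have hk1 : 1 ≤ ρ ^ k := (hgrid k (by omega)).1
      have hρk : ρ ^ k ≤ ρ ^ k * ρ := le_mul_of_one_le_right (by linarith) hρ
      have hstep := div_add_le_div_of_subgradient (by linarith) hρk
        (hpay _ (hgrid k (by omega))) (hsub _ _ hk1 hρk)
      rw [div_mul_cancel_left₀ (by positivity), ← pow_succ] at hstep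
      push_cast
      linarith [ih (by omega)]
  have hB : 1 ≤ ρ ^ n := (hgrid n le_rfl).1
  have htop : u (ρ ^ n) / ρ ^ n < 1 - β := by
    rw [div_lt_iff₀ (by linarith)]
    nlinarith [hpay _ (hgrid n le_rfl)]
  nlinarith [hgrowth n le_rfl]

namespace TruthfulMech

variable {m : ℕ} (M : TruthfulMech m) {y : Fin m → ℝ}

def utility (v : Fin m → ℝ) : ℝ := ∑ i, M.alloc v i * v i - M.pay v

lemma utility_nonneg {v : Fin m → ℝ} (hv : ∀ i, 0 ≤ v i) : 0 ≤ M.utility v := M.ir v hv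

lemma pay_le_sum {v : Fin m → ℝ} (hv : ∀ i, 0 ≤ v i) : M.pay v ≤ ∑ i, v i := by
  have : ∑ i, M.alloc v i * v i ≤ ∑ i, v i :=
    Finset.sum_le_sum fun i _ => mul_le_of_le_one_left (hv i) (M.alloc_le_one v i)
  linarith [M.ir v hv]

lemma utility_update_add_le (hy : ∀ i, 0 ≤ y i) (j : Fin m) {s s' : ℝ} (hs : 0 ≤ s)
    (hs' : 0 ≤ s') :
    M.utility (update y j s) + M.alloc (update y j s) j * (s' - s) ≤
      M.utility (update y j s') := by
  have hic := M.ic (update y j s') (update y j s) (update_nonneg hy j hs')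
    (update_nonneg hy j hs)
  have hsum := Fintype.sum_mul_update (M.alloc (update y j s)) y j s
  rw [Fintype.sum_mul_update] at hic
  unfold utility
  linarith

lemma pay_update_le (hy : ∀ i, 0 ≤ y i) (j : Fin m) (t : ℝ) :
    M.pay (update y j t) ≤
      M.alloc (update y j t) j * t - M.utility (update y j t) + ∑ i, y i := by
  have hsum : ∑ i, M.alloc (update y j t) i * y i ≤ ∑ i, y i :=
    Finset.sum_le_sum fun i _ => mul_le_of_le_one_left (hy i) (M.alloc_le_one _ i)
  have := mul_nonneg (M.alloc_nonneg (update y j t) j) (hy j)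
  rw [utility, Fintype.sum_mul_update]
  linarith

lemma exists_pay_update_le (hy : ∀ i, 0 ≤ y i) (j : Fin m) (n : ℕ) {ρ β : ℝ} (hρ : 1 ≤ ρ)
    (hβ : 1 ≤ β * (1 + n * (1 - ρ⁻¹))) :
    ∃ t ∈ Set.Icc 1 (ρ ^ n), M.pay (update y j t) ≤ β * t + ∑ i, y i := by
  obtain ⟨t, ht, hpay⟩ := exists_mul_sub_le_of_subgradient
    (x := fun s => M.alloc (update y j s) j) (u := fun s => M.utility (update y j s)) n hρ
    (M.alloc_le_one _ _) (M.utility_nonneg (update_nonneg hy j zero_le_one))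
    (fun s s' hs hss' => M.utility_update_add_le hy j (by linarith) (by linarith)) hβ
  exact ⟨t, ht, by linarith [M.pay_update_le hy j t]⟩

lemma exists_mrevM_twoPoint_le (hy : ∀ i, 0 ≤ y i) (j : Fin m) (n : ℕ) {ρ β : ℝ} (hρ : 1 ≤ ρ)
    (hβ : 1 ≤ β * (1 + n * (1 - ρ⁻¹))) :
    ∃ τ ∈ Set.Icc 1 (ρ ^ n),
      mrevM M (Measure.pi (update (fun i => Measure.dirac (y i)) j (twoPoint τ))) ≤
        β + ∑ i, y i := by
  obtain ⟨τ, hτ, hpay⟩ := M.exists_pay_update_le hy j n hρ hβ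
  refine ⟨τ, hτ, ?_⟩
  have hτ0 : 0 < τ := zero_lt_one.trans_le hτ.1
  have hinv : τ⁻¹ ≤ 1 := inv_le_one_of_one_le₀ hτ.1
  have hpay0 : M.pay (update y j 0) ≤ ∑ i, y i := by
    linarith [M.pay_update_le hy j 0, M.utility_nonneg (update_nonneg hy j le_rfl)]
  rw [mrevM, integral_pi_update_twoPoint y j hτ.1 M.pay_meas]
  calc τ⁻¹ * M.pay (update y j τ) + (1 - τ⁻¹) * M.pay (update y j 0)
      ≤ τ⁻¹ * (β * τ + ∑ i, y i) + (1 - τ⁻¹) * ∑ i, y i := by gcongr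
    _ = β + ∑ i, y i := by
        field_simp
        ring

noncomputable def postedPrice (j : Fin m) {p : ℝ} (hp : 0 ≤ p) : TruthfulMech m where
  alloc v := if p ≤ v j then Pi.single j 1 else 0
  pay v := if p ≤ v j then p else 0
  alloc_meas := Measurable.ite (measurableSet_le measurable_const (measurable_pi_apply j))
    measurable_const measurable_const
  pay_meas := Measurable.ite (measurableSet_le measurable_const (measurable_pi_apply j))
    measurable_const measurable_const
  alloc_nonneg v i := by split_ifs <;> simp [Pi.single_apply, apply_ite]
  alloc_le_one v i := by split_ifs <;> simp [Pi.single_apply]; split_ifs <;> norm_num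
  pay_nonneg v := by split_ifs <;> simp [hp]
  ic v w _ _ := by split_ifs <;> simp [Pi.single_apply] <;> linarith
  ir v _ := by split_ifs with h <;> simp [Pi.single_apply, h]

lemma mrevM_le_optM {F : Measure (Fin m → ℝ)} {C : ℝ}
    (hC : ∀ M' : TruthfulMech m, mrevM M' F ≤ C) : mrevM M F ≤ optM m F :=
  le_ciSup ⟨C, by rintro _ ⟨M', rfl⟩; exact hC M'⟩ M

end TruthfulMech

lemma one_le_optM_twoPoint {m : ℕ} {y : Fin m → ℝ} (hy : ∀ i, 0 ≤ y i) (j : Fin m) {τ : ℝ}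
    (hτ : 1 ≤ τ) :
    1 ≤ optM m (Measure.pi (update (fun i => Measure.dirac (y i)) j (twoPoint τ))) := by
  have hτ0 : 0 < τ := zero_lt_one.trans_le hτ
  have hinv : τ⁻¹ ≤ 1 := inv_le_one_of_one_le₀ hτ
  let M := TruthfulMech.postedPrice j hτ0.le
  have hM : mrevM M (Measure.pi (update (fun i => Measure.dirac (y i)) j (twoPoint τ))) = 1 := by
    rw [mrevM, integral_pi_update_twoPoint y j hτ M.pay_meas]
    simp [M, TruthfulMech.postedPrice, hτ0.not_ge, hτ0.ne']
  refine hM.symm.le.trans <|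
    M.mrevM_le_optM (C := ∑ i, update y j τ i + ∑ i, update y j 0 i) fun M' => ?_
  rw [mrevM, integral_pi_update_twoPoint y j hτ M'.pay_meas]
  have hτpay := M'.pay_le_sum (update_nonneg hy j hτ0.le)
  have h0pay := M'.pay_le_sum (update_nonneg hy j le_rfl)
  have hτinv : τ⁻¹ * M'.pay (update y j τ) ≤ M'.pay (update y j τ) :=
    mul_le_of_le_one_left (M'.pay_nonneg _) hinv
  have h0inv : (1 - τ⁻¹) * M'.pay (update y j 0) ≤ M'.pay (update y j 0) :=
    mul_le_of_le_one_left (M'.pay_nonneg _) (by linarith [inv_pos.2 hτ0])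
  linarith

lemma sub_sq_le_one_sub_exp_neg {x : ℝ} (hx : 0 ≤ x) : x - x ^ 2 ≤ 1 - Real.exp (-x) := by
  have h1 := Real.add_one_le_exp x
  have h2 := Real.add_one_le_exp (-x)
  have h3 : Real.exp (-x) * Real.exp x = 1 := by
    rw [← Real.exp_add, neg_add_cancel, Real.exp_zero]
  nlinarith [mul_le_mul_of_nonneg_left h1 (Real.exp_pos (-x)).le]

lemma exists_nat_sub_le_mul_one_sub_exp_neg {L η : ℝ} (hL : 0 ≤ L) (hη : 0 < η) :
    ∃ n : ℕ, 0 < n ∧ L - η ≤ n * (1 - Real.exp (-(L / n))) := by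
  obtain ⟨n, hn⟩ := exists_nat_gt (L ^ 2 / η)
  have hn0 : (0 : ℝ) < n := lt_of_le_of_lt (by positivity) hn
  refine ⟨n, Nat.cast_pos.1 hn0, ?_⟩
  have hLn : L ^ 2 / n ≤ η := by
    rw [div_le_iff₀ hn0]; rw [div_lt_iff₀ hη] at hn; linarith
  calc L - η ≤ L - L ^ 2 / n := by linarith
    _ = n * (L / n - (L / n) ^ 2) := by field_simp
    _ ≤ n * (1 - Real.exp (-(L / n))) :=
      mul_le_mul_of_nonneg_left (sub_sq_le_one_sub_exp_neg (by positivity)) hn0.le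

lemma exists_geometric_grid {B η : ℝ} (hB : 1 ≤ B) (hη : 0 < η) :
    ∃ (n : ℕ) (ρ : ℝ), 1 ≤ ρ ∧ ρ ^ n = B ∧ Real.log B - η ≤ n * (1 - ρ⁻¹) := by
  obtain ⟨n, hn, hnL⟩ := exists_nat_sub_le_mul_one_sub_exp_neg (Real.log_nonneg hB) hη
  refine ⟨n, Real.exp (Real.log B / n),
    Real.one_le_exp (div_nonneg (Real.log_nonneg hB) n.cast_nonneg), ?_, ?_⟩
  · rw [← Real.exp_nat_mul, mul_div_cancel₀ _ (Nat.cast_ne_zero.2 hn.ne'),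
      Real.exp_log (by linarith)]
  · rwa [← Real.exp_neg]

lemma mul_le_one_of_le_inv_add {ε L D R κ : ℝ} (hε : 0 < ε) (hL : 0 ≤ L)
    (hD : 1 + L - ε / 2 ≤ D) (hκ : κ * (1 + L) ^ 2 ≤ ε / 2) (hR0 : 0 ≤ R)
    (hR : R ≤ D⁻¹ + κ) :
    (1 - ε + L) * R ≤ 1 := by
  set c := 1 - ε + L
  rcases le_or_gt c 0 with hc | hc
  · nlinarith
  have hcε : 0 < c + ε / 2 := by linarith
  have hDinv : c * D⁻¹ ≤ c / (c + ε / 2) := by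
    rw [← div_eq_mul_inv]; exact div_le_div_of_nonneg_left hc.le hcε (by linarith)
  have hcκ : c * κ ≤ ε / 2 / (c + ε / 2) := by
    rw [le_div_iff₀ hcε]
    have hcc : c * (c + ε / 2) ≤ (1 + L) ^ 2 := by nlinarith
    rcases le_or_gt κ 0 with hκ0 | hκ0
    · nlinarith [mul_pos hc hcε]
    · nlinarith [mul_le_mul_of_nonneg_left hcc hκ0.le]
  calc c * R ≤ c * (D⁻¹ + κ) := by gcongr
    _ ≤ c / (c + ε / 2) + ε / 2 / (c + ε / 2) := by linarith
    _ = 1 := by field_simp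

theorem stmt17_general (m : ℕ) (hm : 0 < m) (r : Fin m → ℝ)
    (rmax : ℝ) (hrmax : IsGreatest (Set.range r) rmax) :
    ∀ ε : ℝ, 0 < ε → ∃ μs : Fin m → ℝ, (∀ j, 0 < μs j) ∧
      ∀ M : TruthfulMech m, ∃ Fs : Fin m → Measure ℝ,
        (∀ j, MeanVarLe (Fs j) (μs j) (r j * μs j)) ∧
        (1 - ε + Real.log (1 + rmax ^ 2)) * mrevM M (Measure.pi Fs) ≤
          optM m (Measure.pi Fs) := by
  intro ε hε
  obtain ⟨⟨j, rfl⟩, -⟩ := hrmax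
  have hB : 1 ≤ 1 + r j ^ 2 := by nlinarith
  set L := Real.log (1 + r j ^ 2)
  have hL : 0 ≤ L := Real.log_nonneg hB
  obtain ⟨n, ρ, hρ, hρn, hD⟩ := exists_geometric_grid hB (half_pos hε)
  have hD0 : 0 < 1 + n * (1 - ρ⁻¹) := add_pos_of_pos_of_nonneg one_pos
    (mul_nonneg n.cast_nonneg (sub_nonneg.2 (inv_le_one_of_one_le₀ hρ)))
  set κ := ε / (2 * (1 + L) ^ 2)
  set δ := κ / m
  have hδ : 0 < δ := by positivity
  have hy : ∀ _ : Fin m, 0 ≤ δ := fun _ => hδ.le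
  refine ⟨update (fun _ => δ) j 1, (forall_update_iff _ fun _ c => 0 < c).2
    ⟨one_pos, fun _ _ => hδ⟩, fun M => ?_⟩
  obtain ⟨τ, hτ, hrev⟩ := M.exists_mrevM_twoPoint_le hy j n hρ (inv_mul_cancel₀ hD0.ne').ge
  have hsum : ∑ _i : Fin m, δ = κ := by
    rw [Finset.sum_const, Finset.card_univ, Fintype.card_fin, nsmul_eq_mul]
    exact mul_div_cancel₀ κ (by positivity)
  refine ⟨_, meanVarLe_update_twoPoint hδ.le hτ.1 (by linarith [hτ.2]), ?_⟩
  calc (1 - ε + L) * mrevM M _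
      ≤ 1 := mul_le_one_of_le_inv_add hε hL (by linarith)
        (le_of_eq (by simp only [κ]; field_simp)) (integral_nonneg M.pay_nonneg) (hsum ▸ hrev)
    _ ≤ _ := one_le_optM_twoPoint hy j hτ.1

/-- Fix `m ≥ 1`, positive reals `r_1,…,r_m`, and `r = max_j r_j`. For
every `ε > 0` there are means `μ_1,…,μ_m > 0` (with `σ_j = r_j·μ_j`) such that for every
truthful mechanism for `m` items there is a product distribution `F = F_1 × ⋯ × F_m` on
`[0,∞)^m`, whose `j`-th marginal has mean `μ_j` and variance at most `σ_j²`, with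
`OPT_m(F) ≥ (1 − ε + ln(1+r²)) · E_{v∼F}[π(v)]`. -/
theorem stmt17 (m : ℕ) (hm : 0 < m) (r : Fin m → ℝ) (hr : ∀ j, 0 < r j)
    (rmax : ℝ) (hrmax : IsGreatest (Set.range r) rmax) :
    ∀ ε : ℝ, 0 < ε → ∃ μs : Fin m → ℝ, (∀ j, 0 < μs j) ∧
      ∀ M : TruthfulMech m, ∃ Fs : Fin m → Measure ℝ,
        (∀ j, MeanVarLe (Fs j) (μs j) (r j * μs j)) ∧
        (1 - ε + Real.log (1 + rmax ^ 2)) * mrevM M (Measure.pi Fs) ≤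
          optM m (Measure.pi Fs) :=
  stmt17_general m hm r rmax hrmax
end

section
/- Let λ ∈ (0,1) and let F be a continuous probability distribution supported on an interval D ⊆ [0,∞), with density f positive on D, finite mean μ, and such that the λ-generalized virtual valuation φ_λ(x) = λx − (1−F(x))/f(x) is nondecreasing on D (F is λ-regular). Then posting the mean as a price is a (1−λ)^{−1/λ}-approximation to the optimal revenue: OPT(F) ≤ (1−λ)^{−1/λ} · μ · P_{X∼F}(X ≥ μ). -/
open MeasureTheory

open Set Filter Topology intervalIntegral

/-!
Write `S(t) = ∫_t^∞ f` and `φ = φ_λ(μ)`. Monotonicity of `φ_λ` compares the hazard rate `f / S`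
with that of the generalized Pareto distribution through `μ`: `S ≤ (λt − φ) f` to the right of `μ`
and `(λt − φ) f ≤ S` to the left. A Grönwall-type argument on the Dini derivative of
`S · (λt − φ)^{1/λ}` turns this into `S(t) ≤ S(μ) ((λμ − φ) / (λt − φ))^{1/λ}` wherever
`λt − φ > 0`. Integrating the bound, capped by `1`, over `(0, ∞)` gives `μ = ∫ S ≤ c + b / (1 − λ)`
for explicit `b, c`, which rearranges to `S(μ)^λ ≥ 1 − λ`; and `OPT ≤ μ` by Markov's inequality.
-/

noncomputable def survival (f : ℝ → ℝ) (t : ℝ) : ℝ :=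
  ∫ x in Ioi t, f x

/-- The paper's `φ_λ`, with `1 − F` written as the tail integral of the density. -/
noncomputable def virtualValue (l : ℝ) (f : ℝ → ℝ) (x : ℝ) : ℝ :=
  l * x - survival f x / f x

theorem slope_fun_mul (u w : ℝ → ℝ) (x z : ℝ) :
    slope (fun y => u y * w y) x z = w z * slope u x z + u x * slope w x z := by
  simp only [slope_def_field]
  ring

theorem le_of_slope_le_of_tendsto_zero {g : ℝ → ℝ} {σ : ℝ → ℝ → ℝ} {a b : ℝ} (hab : a ≤ b)
    (hg : ContinuousOn g (Icc a b)) (hσ : ∀ x ∈ Ico a b, Tendsto (σ x) (𝓝[>] x) (𝓝 0))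
    (hslope : ∀ x ∈ Ico a b, ∀ z ∈ Ioc x b, slope g x z ≤ σ x z) : g b ≤ g a := by
  refine image_le_of_liminf_slope_right_le_deriv_boundary hg (B := fun _ => g a) (B' := 0) le_rfl
    continuousOn_const (fun x _ => hasDerivWithinAt_const _ _ _) (fun x hx r hr => ?_)
    (right_mem_Icc.2 hab)
  have hlt : ∀ᶠ z in 𝓝[>] x, σ x z < r := (hσ x hx).eventually (gt_mem_nhds hr)
  refine Eventually.frequently ?_
  filter_upwards [hlt, Ioc_mem_nhdsGT hx.2] with z hz hzI
  exact (hslope x hx z hzI).trans_lt hz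

theorem tendsto_slope_affine_rpow {l v x : ℝ} (hl : 0 < l) (hx : 0 < l * x - v) :
    Tendsto (slope (fun y => (l * y - v) ^ (1 / l)) x) (𝓝[>] x)
      (𝓝 ((l * x - v) ^ (1 / l) / (l * x - v))) := by
  have hderiv : HasDerivAt (fun y => (l * y - v) ^ (1 / l))
      ((l * x - v) ^ (1 / l) / (l * x - v)) x := by
    convert (((hasDerivAt_id x).const_mul l).sub_const v).rpow_const (p := 1 / l)
      (Or.inl hx.ne') using 1
    · simp
    rw [id, Real.rpow_sub_one hx.ne']
    field_simp
  exact (hasDerivAt_iff_tendsto_slope.1 hderiv).mono_left (nhdsGT_le_nhdsNE x)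

section Survival

variable {f : ℝ → ℝ}

theorem survival_sub_survival (hf : Integrable f) {s t : ℝ} (hst : s ≤ t) :
    survival f s - survival f t = ∫ x in s..t, f x := by
  rw [survival, survival, ← Ioc_union_Ioi_eq_Ioi hst, setIntegral_union (Ioc_disjoint_Ioi le_rfl)
    measurableSet_Ioi hf.integrableOn hf.integrableOn, integral_of_le hst]
  ring

theorem continuous_survival (hf : Integrable f) : Continuous (survival f) := by
  have : survival f = fun t => survival f 0 - ∫ x in (0 : ℝ)..t, f x := by
    funext t
    rcases le_total 0 t with h | h
    · linarith [survival_sub_survival hf h]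
    · rw [integral_symm]
      linarith [survival_sub_survival hf h]
  rw [this]
  exact continuous_const.sub (hf.continuous_primitive 0)

theorem survival_nonneg (hf0 : 0 ≤ f) (t : ℝ) : 0 ≤ survival f t :=
  setIntegral_nonneg measurableSet_Ioi fun x _ => hf0 x

theorem antitone_survival (hf : Integrable f) (hf0 : 0 ≤ f) : Antitone (survival f) :=
  fun s t hst => sub_nonneg.1 <| by
    rw [survival_sub_survival hf hst]
    exact integral_nonneg hst fun x _ => hf0 x

end Survival

section Comparison

variable {f : ℝ → ℝ} {l v : ℝ}

theorem antitoneOn_survival_div (hf : Integrable f) (hf0 : 0 ≤ f) (hl : 0 ≤ l) {x : ℝ}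
    (hx : 0 < l * x - v) : AntitoneOn (fun t => survival f t / (l * t - v)) (Ici x) :=
  fun s hs t _ hst => div_le_div₀ (survival_nonneg hf0 s) (antitone_survival hf hf0 hst)
    (by nlinarith [mem_Ici.1 hs]) (by nlinarith)

theorem slope_survival_le (hf : Integrable f) (hf0 : 0 ≤ f) (hl : 0 ≤ l) {x z : ℝ} (hxz : x < z)
    (hx : 0 < l * x - v) (hle : ∀ t ∈ Icc x z, survival f t ≤ (l * t - v) * f t) :
    slope (survival f) x z ≤ -(survival f z / (l * z - v)) := by
  have hbound : ∀ t ∈ Icc x z, survival f z / (l * z - v) ≤ f t := fun t ht =>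
    calc survival f z / (l * z - v) ≤ survival f t / (l * t - v) :=
          antitoneOn_survival_div hf hf0 hl hx ht.1 (mem_Ici.2 hxz.le) ht.2
      _ ≤ f t := (div_le_iff₀ (by nlinarith [ht.1])).2 (by linarith [hle t ht])
  have hint := integral_mono_on hxz.le intervalIntegrable_const hf.intervalIntegrable hbound
  rw [intervalIntegral.integral_const, smul_eq_mul] at hint
  rw [slope_def_field, div_le_iff₀ (sub_pos.2 hxz)]
  linarith [survival_sub_survival hf hxz.le]

theorem neg_div_le_slope_survival (hf : Integrable f) (hf0 : 0 ≤ f) (hl : 0 ≤ l) {x z : ℝ}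
    (hxz : x < z) (hx : 0 < l * x - v) (hle : ∀ t ∈ Icc x z, (l * t - v) * f t ≤ survival f t) :
    -(survival f x / (l * x - v)) ≤ slope (survival f) x z := by
  have hbound : ∀ t ∈ Icc x z, f t ≤ survival f x / (l * x - v) := fun t ht =>
    calc f t ≤ survival f t / (l * t - v) :=
          (le_div_iff₀ (by nlinarith [ht.1])).2 (by linarith [hle t ht])
      _ ≤ survival f x / (l * x - v) :=
          antitoneOn_survival_div hf hf0 hl hx self_mem_Ici ht.1 ht.1
  have hint := integral_mono_on hxz.le hf.intervalIntegrable intervalIntegrable_const hbound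
  rw [intervalIntegral.integral_const, smul_eq_mul] at hint
  rw [slope_def_field, le_div_iff₀ (sub_pos.2 hxz)]
  linarith [survival_sub_survival hf hxz.le]

theorem continuous_survival_mul_rpow (hf : Integrable f) (hl : 0 < l) :
    Continuous fun y => survival f y * (l * y - v) ^ (1 / l) :=
  (continuous_survival hf).mul <| by
    exact (by fun_prop : Continuous fun y : ℝ => l * y - v).rpow_const
      fun _ => Or.inr (by positivity)

theorem survival_mul_rpow_le_of_le_mul (hf : Integrable f) (hf0 : 0 ≤ f) (hl : 0 < l) {a b : ℝ}
    (hab : a ≤ b) (ha : 0 < l * a - v)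
    (hle : ∀ t ∈ Icc a b, survival f t ≤ (l * t - v) * f t) :
    survival f b * (l * b - v) ^ (1 / l) ≤ survival f a * (l * a - v) ^ (1 / l) := by
  have hpos : ∀ x ∈ Ico a b, 0 < l * x - v := fun x hx => by nlinarith [hx.1]
  -- With `β y = l * y - v`, `σ x` tends to `-(S x / β x) * β x ^ (1 / l) + S x * (β ^ (1 / l))' x`,
  -- which vanishes because the exponent `1 / l` makes `(β ^ (1 / l))' = β ^ (1 / l) / β`.
  refine le_of_slope_le_of_tendsto_zero (σ := fun x z => -(survival f z / (l * z - v)) *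
      (l * z - v) ^ (1 / l) + survival f x * slope (fun y => (l * y - v) ^ (1 / l)) x z)
    hab (continuous_survival_mul_rpow hf hl).continuousOn (fun x hx => ?_) (fun x hx z hz => ?_)
  · have hcont : ContinuousAt (fun z => -(survival f z / (l * z - v)) * (l * z - v) ^ (1 / l)) x :=
      ((continuous_survival hf).continuousAt.div
        (by fun_prop : ContinuousAt (fun z : ℝ => l * z - v) x) (hpos x hx).ne').neg.mul
        ((by fun_prop : ContinuousAt (fun z : ℝ => l * z - v) x).rpow_const
          (Or.inl (hpos x hx).ne'))
    convert (hcont.tendsto.mono_left nhdsWithin_le_nhds).add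
      ((tendsto_slope_affine_rpow hl (hpos x hx)).const_mul (survival f x)) using 2
    ring
  · have hs := slope_survival_le hf hf0 hl.le hz.1 (hpos x hx)
      fun t ht => hle t ⟨hx.1.trans ht.1, ht.2.trans hz.2⟩
    rw [slope_fun_mul]
    nlinarith [mul_le_mul_of_nonneg_left hs (Real.rpow_nonneg (by nlinarith [hx.1, hz.1] :
      (0 : ℝ) ≤ l * z - v) (1 / l))]

theorem survival_mul_rpow_le_of_mul_le (hf : Integrable f) (hf0 : 0 ≤ f) (hl : 0 < l) {a b : ℝ}
    (hab : a ≤ b) (ha : 0 < l * a - v)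
    (hle : ∀ t ∈ Icc a b, (l * t - v) * f t ≤ survival f t) :
    survival f a * (l * a - v) ^ (1 / l) ≤ survival f b * (l * b - v) ^ (1 / l) := by
  have hpos : ∀ x ∈ Ico a b, 0 < l * x - v := fun x hx => by nlinarith [hx.1]
  refine neg_le_neg_iff.1 <| le_of_slope_le_of_tendsto_zero
    (g := fun y => -(survival f y * (l * y - v) ^ (1 / l)))
    (σ := fun x z => survival f x / (l * x - v) * (l * z - v) ^ (1 / l) -
      survival f x * slope (fun y => (l * y - v) ^ (1 / l)) x z)
    hab (continuous_survival_mul_rpow hf hl).neg.continuousOn (fun x hx => ?_) (fun x hx z hz => ?_)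
  · have hcont : ContinuousAt (fun z => survival f x / (l * x - v) * (l * z - v) ^ (1 / l)) x :=
      continuousAt_const.mul ((by fun_prop : ContinuousAt (fun z : ℝ => l * z - v) x).rpow_const
          (Or.inl (hpos x hx).ne'))
    convert (hcont.tendsto.mono_left nhdsWithin_le_nhds).sub
      ((tendsto_slope_affine_rpow hl (hpos x hx)).const_mul (survival f x)) using 2
    ring
  · have hs := neg_div_le_slope_survival hf hf0 hl.le hz.1 (hpos x hx)
      fun t ht => hle t ⟨hx.1.trans ht.1, ht.2.trans hz.2⟩
    have hneg : slope (fun y => -(survival f y * (l * y - v) ^ (1 / l))) x z =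
        -slope (fun y => survival f y * (l * y - v) ^ (1 / l)) x z := by
      simp only [slope_def_field]; ring
    rw [hneg, slope_fun_mul]
    nlinarith [mul_le_mul_of_nonneg_left hs (Real.rpow_nonneg (by nlinarith [hx.1, hz.1] :
      (0 : ℝ) ≤ l * z - v) (1 / l))]

end Comparison

section Pareto

variable {l b c : ℝ}

theorem hasDerivAt_pareto_primitive (hl0 : 0 < l) (hl1 : l < 1) (hb : 0 < b) {t : ℝ}
    (ht : c ≤ t) :
    HasDerivAt (fun s => -(b ^ (1 / l) / (1 - l)) * (b + l * (s - c)) ^ (1 - 1 / l))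
      ((b / (b + l * (t - c))) ^ (1 / l)) t := by
  have hB : 0 < b + l * (t - c) := by nlinarith
  have hderiv : HasDerivAt (fun s => -(b ^ (1 / l) / (1 - l)) * (b + l * (s - c)) ^ (1 - 1 / l))
      (-(b ^ (1 / l) / (1 - l)) * (l * (1 - 1 / l) * (b + l * (t - c)) ^ (1 - 1 / l - 1))) t := by
    simpa using ((((hasDerivAt_id t).sub_const c).const_mul l).const_add b).rpow_const
      (p := 1 - 1 / l) (Or.inl hB.ne') |>.const_mul (-(b ^ (1 / l) / (1 - l)))
  refine hderiv.congr_deriv ?_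
  rw [show 1 - 1 / l - 1 = -(1 / l) by ring, Real.rpow_neg hB.le,
    Real.div_rpow hb.le hB.le]
  have : 1 - l ≠ 0 := by linarith
  field_simp
  ring

theorem tendsto_pareto_primitive (hl0 : 0 < l) (hl1 : l < 1) :
    Tendsto (fun s => -(b ^ (1 / l) / (1 - l)) * (b + l * (s - c)) ^ (1 - 1 / l)) atTop
      (𝓝 0) := by
  have hB : Tendsto (fun s => b + l * (s - c)) atTop atTop :=
    tendsto_atTop_add_const_left _ b
      ((tendsto_atTop_add_const_right _ (-c) tendsto_id).const_mul_atTop hl0)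
  have hexp : 1 - 1 / l = -(1 / l - 1) := by ring
  have := ((tendsto_rpow_neg_atTop (y := 1 / l - 1) (by
    rw [sub_pos]; exact one_lt_one_div hl0 hl1)).comp hB).const_mul
      (-(b ^ (1 / l) / (1 - l)))
  simpa [hexp, sub_eq_add_neg] using this

theorem integrableOn_pareto (hl0 : 0 < l) (hl1 : l < 1) (hb : 0 < b) :
    IntegrableOn (fun t => (b / (b + l * (t - c))) ^ (1 / l)) (Ioi c) :=
  integrableOn_Ioi_deriv_of_nonneg' (fun t ht => hasDerivAt_pareto_primitive hl0 hl1 hb ht)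
    (fun t ht => Real.rpow_nonneg (div_nonneg hb.le (by nlinarith [mem_Ioi.1 ht])) _)
    (tendsto_pareto_primitive hl0 hl1)

theorem integral_pareto (hl0 : 0 < l) (hl1 : l < 1) (hb : 0 < b) :
    ∫ t in Ioi c, (b / (b + l * (t - c))) ^ (1 / l) = b / (1 - l) := by
  rw [integral_Ioi_of_hasDerivAt_of_nonneg' (fun t ht => hasDerivAt_pareto_primitive hl0 hl1 hb ht)
    (fun t ht => Real.rpow_nonneg (div_nonneg hb.le (by nlinarith [mem_Ioi.1 ht])) _)
    (tendsto_pareto_primitive hl0 hl1), sub_self, mul_zero, add_zero, zero_sub, neg_mul, neg_neg,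
    div_mul_eq_mul_div, ← Real.rpow_add hb, add_sub_cancel, Real.rpow_one]

theorem integral_Ioi_le_of_le_pareto {T : ℝ → ℝ} (hl0 : 0 < l) (hl1 : l < 1) (hb : 0 < b)
    (hc : 0 ≤ c) (hT : Continuous T) (hT0 : ∀ t, 0 ≤ T t) (hT1 : ∀ t ∈ Ioc 0 c, T t ≤ 1)
    (hTc : ∀ t ∈ Ioi c, T t ≤ (b / (b + l * (t - c))) ^ (1 / l)) :
    ∫ t in Ioi 0, T t ≤ c + b / (1 - l) := by
  have hwint := integrableOn_pareto (c := c) hl0 hl1 hb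
  have hTint : IntegrableOn T (Ioi c) := hwint.mono' hT.aestronglyMeasurable.restrict <|
    (ae_restrict_iff' measurableSet_Ioi).2 <| .of_forall fun t ht => by
      rw [Real.norm_of_nonneg (hT0 t)]; exact hTc t ht
  have hTint' : IntegrableOn T (Ioc 0 c) := hT.integrableOn_Icc.mono_set Ioc_subset_Icc_self
  have hhead : ∫ t in Ioc 0 c, T t ≤ c := by
    simpa [hc] using setIntegral_mono_on hTint' (integrableOn_const (by simp))
      measurableSet_Ioc hT1
  have htail : ∫ t in Ioi c, T t ≤ b / (1 - l) :=
    (setIntegral_mono_on hTint hwint measurableSet_Ioi hTc).trans_eq (integral_pareto hl0 hl1 hb)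
  rw [← Ioc_union_Ioi_eq_Ioi hc, setIntegral_union (Ioc_disjoint_Ioi le_rfl) measurableSet_Ioi
    hTint' hTint]
  linarith

end Pareto

section Regular

variable {f : ℝ → ℝ} {l : ℝ} {D : Set ℝ} {m : ℝ}

theorem survival_le_mul_of_monotoneOn (hD : D.OrdConnected) (hfD : ∀ x ∈ D, 0 < f x)
    (hfD' : ∀ x ∉ D, f x = 0) (hreg : MonotoneOn (virtualValue l f) D) (hm : m ∈ D) {x : ℝ}
    (hmx : m ≤ x) : survival f x ≤ (l * x - virtualValue l f m) * f x := by
  by_cases hx : x ∈ D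
  · have : virtualValue l f m ≤ l * x - survival f x / f x := hreg hm hx hmx
    rw [← div_le_iff₀ (hfD x hx)]
    linarith
  · have : survival f x = 0 := setIntegral_eq_zero_of_forall_eq_zero fun y hy =>
      hfD' y fun hy' => hx (hD.out hm hy' ⟨hmx, (mem_Ioi.1 hy).le⟩)
    rw [this, hfD' x hx, mul_zero]

theorem mul_le_survival_of_monotoneOn (hf0 : 0 ≤ f) (hfD : ∀ x ∈ D, 0 < f x)
    (hfD' : ∀ x ∉ D, f x = 0) (hreg : MonotoneOn (virtualValue l f) D) (hm : m ∈ D) {x : ℝ}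
    (hxm : x ≤ m) : (l * x - virtualValue l f m) * f x ≤ survival f x := by
  by_cases hx : x ∈ D
  · have : l * x - survival f x / f x ≤ virtualValue l f m := hreg hx hm hxm
    rw [← le_div_iff₀ (hfD x hx)]
    linarith
  · rw [hfD' x hx, mul_zero]
    exact survival_nonneg hf0 x

theorem survival_mul_rpow_le_of_monotoneOn (hf : Integrable f) (hf0 : 0 ≤ f) (hl : 0 < l)
    (hD : D.OrdConnected) (hfD : ∀ x ∈ D, 0 < f x) (hfD' : ∀ x ∉ D, f x = 0)
    (hreg : MonotoneOn (virtualValue l f) D) (hm : m ∈ D) {t : ℝ}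
    (ht : 0 < l * t - virtualValue l f m) :
    survival f t * (l * t - virtualValue l f m) ^ (1 / l) ≤
      survival f m * (l * m - virtualValue l f m) ^ (1 / l) := by
  rcases le_total t m with htm | hmt
  · exact survival_mul_rpow_le_of_mul_le hf hf0 hl htm ht fun x hx =>
      mul_le_survival_of_monotoneOn hf0 hfD hfD' hreg hm hx.2
  have hm' : l * m - virtualValue l f m = survival f m / f m := by rw [virtualValue]; ring
  rcases (survival_nonneg hf0 m).eq_or_lt with hSm | hSm
  · have hSt : survival f t = 0 :=
      le_antisymm (hSm ▸ antitone_survival hf hf0 hmt) (survival_nonneg hf0 t)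
    rw [hSt, ← hSm, zero_mul, zero_mul]
  · exact survival_mul_rpow_le_of_le_mul hf hf0 hl hmt (hm' ▸ div_pos hSm (hfD m hm))
      fun x hx => survival_le_mul_of_monotoneOn hD hfD hfD' hreg hm hx.1

theorem one_sub_rpow_le_survival_of_monotoneOn (hl0 : 0 < l) (hl1 : l < 1) (hf : Integrable f)
    (hf0 : 0 ≤ f) (hD : D.OrdConnected)
    (hfD : ∀ x ∈ D, 0 < f x) (hfD' : ∀ x ∉ D, f x = 0) (hreg : MonotoneOn (virtualValue l f) D)
    (hm : m ∈ D) (hSm : 0 < survival f m) (hS0 : survival f 0 = 1)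
    (hmean : ∫ t in Ioi 0, survival f t = m) :
    (1 - l) ^ (1 / l) ≤ survival f m := by
  set v := virtualValue l f m
  set β := survival f m
  have hh : 0 < l * m - v := by
    simpa [v, virtualValue] using div_pos hSm (hfD m hm)
  set b := (l * m - v) * β ^ l
  -- the Pareto bound through `m` equals `1` at `c`
  set c := (v + b) / l
  have hb : 0 < b := by positivity
  have hbc : ∀ t, l * t - v = b + l * (t - c) := fun t => by
    simp only [c]; field_simp; ring
  have hpareto : ∀ t ∈ Ioi c, survival f t ≤ (b / (b + l * (t - c))) ^ (1 / l) := by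
    intro t ht
    have hBt : 0 < b + l * (t - c) := by nlinarith [mem_Ioi.1 ht]
    have hdom := survival_mul_rpow_le_of_monotoneOn hf hf0 hl0 hD hfD hfD' hreg hm
      (hbc t ▸ hBt)
    have hb' : β * (l * m - v) ^ (1 / l) = b ^ (1 / l) := by
      rw [Real.mul_rpow hh.le (by positivity), ← Real.rpow_mul hSm.le,
        mul_one_div_cancel hl0.ne', Real.rpow_one, mul_comm]
    rw [hbc, hb'] at hdom
    rw [Real.div_rpow hb.le hBt.le, le_div_iff₀ (by positivity)]
    exact hdom
  have hc : 0 ≤ c := by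
    by_contra! hc
    have hlt : b / (b + l * (0 - c)) < 1 := (div_lt_one (by nlinarith)).2 (by nlinarith)
    have := (hS0 ▸ hpareto 0 hc).trans_lt
      (Real.rpow_lt_one (div_nonneg hb.le (by nlinarith)) hlt (by positivity))
    exact this.false
  have hbound := integral_Ioi_le_of_le_pareto hl0 hl1 hb hc (continuous_survival hf)
    (survival_nonneg hf0) (fun t ht => hS0 ▸ antitone_survival hf hf0 ht.1.le) hpareto
  have hβl : 1 - l ≤ β ^ l := by
    rw [hmean, div_add_div _ _ hl0.ne' (by linarith), le_div_iff₀ (by nlinarith)] at hbound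
    nlinarith
  calc (1 - l) ^ (1 / l) ≤ (β ^ l) ^ (1 / l) := Real.rpow_le_rpow (by linarith) hβl (by positivity)
    _ = β := by rw [← Real.rpow_mul hSm.le, mul_one_div_cancel hl0.ne', Real.rpow_one]

end Regular

theorem toReal_withDensity_ofReal_apply {α : Type*} [MeasurableSpace α] {μ : Measure α}
    {f : α → ℝ} {s : Set α} (hs : MeasurableSet s) (hf : IntegrableOn f s μ)
    (hf0 : 0 ≤ᵐ[μ.restrict s] f) :
    (μ.withDensity (fun x => ENNReal.ofReal (f x)) s).toReal = ∫ x in s, f x ∂μ := by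
  rw [withDensity_apply _ hs, ← ofReal_integral_eq_lintegral_ofReal hf hf0,
    ENNReal.toReal_ofReal (integral_nonneg_of_ae hf0)]

theorem opt_le_integral {F : Measure ℝ} (hint : Integrable (fun x => x) F)
    (hF : 0 ≤ᵐ[F] fun x => x) : opt F ≤ ∫ x, x ∂F := by
  have h0 : 0 ≤ ∫ x, x ∂F := integral_nonneg_of_ae hF
  exact Real.iSup_le (fun p => Real.iSup_le (fun _ => mul_meas_ge_le_integral_of_nonneg hF hint p)
    h0) h0

theorem integral_id_mem_of_ordConnected {F : Measure ℝ} [IsProbabilityMeasure F] {D : Set ℝ}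
    (hint : Integrable (fun x => x) F) (hD : D.OrdConnected) (hFD : F Dᶜ = 0) :
    ∫ x, x ∂F ∈ D := by
  obtain ⟨d, hd, hle⟩ : ∃ d ∈ D, ∫ x, x ∂F ≤ d := by
    by_contra! h
    exact (measure_integral_le_pos hint).ne'
      (measure_mono_null (fun x hx hxD => (h x hxD).not_ge hx) hFD)
  obtain ⟨d', hd', hge⟩ : ∃ d ∈ D, d ≤ ∫ x, x ∂F := by
    by_contra! h
    exact (measure_le_integral_pos hint).ne'
      (measure_mono_null (fun x hx hxD => (h x hxD).not_ge hx) hFD)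
  exact hD.out hd' hd ⟨hge, hle⟩

section Density

variable {f : ℝ → ℝ}

theorem integrable_of_isProbabilityMeasure_withDensity (hf : Measurable f) (hf0 : 0 ≤ f)
    [IsProbabilityMeasure (volume.withDensity fun x => ENNReal.ofReal (f x))] : Integrable f :=
  ⟨hf.aestronglyMeasurable, by
    rw [hasFiniteIntegral_iff_ofReal (.of_forall hf0), ← setLIntegral_univ,
      ← withDensity_apply _ .univ, measure_univ]
    exact ENNReal.one_lt_top⟩

theorem withDensity_ofReal_compl_eq_zero (hf : Measurable f) {D : Set ℝ}
    (hfD' : ∀ x ∉ D, f x = 0) : volume.withDensity (fun x => ENNReal.ofReal (f x)) Dᶜ = 0 := by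
  rw [withDensity_apply_eq_zero' hf.ennreal_ofReal.aemeasurable]
  exact measure_mono_null (fun x ⟨hx, hxD⟩ => hx (by simp [hfD' x hxD])) measure_empty

theorem measureReal_withDensity_Ioi (hf : Integrable f) (hf0 : 0 ≤ f) (t : ℝ) :
    (volume.withDensity fun x => ENNReal.ofReal (f x)).real (Ioi t) = survival f t :=
  toReal_withDensity_ofReal_apply measurableSet_Ioi hf.integrableOn (.of_forall fun x => hf0 x)

theorem measureReal_withDensity_Ici (hf : Integrable f) (hf0 : 0 ≤ f) (t : ℝ) :
    (volume.withDensity fun x => ENNReal.ofReal (f x)).real (Ici t) = survival f t :=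
  (toReal_withDensity_ofReal_apply measurableSet_Ici hf.integrableOn
    (.of_forall fun x => hf0 x)).trans integral_Ici_eq_integral_Ioi

theorem one_sub_toReal_withDensity_Iic (hf : Integrable f) (hf0 : 0 ≤ f)
    [IsProbabilityMeasure (volume.withDensity fun x => ENNReal.ofReal (f x))] (t : ℝ) :
    1 - ((volume.withDensity fun x => ENNReal.ofReal (f x)) (Iic t)).toReal = survival f t := by
  rw [← measureReal_def, ← probReal_compl_eq_one_sub measurableSet_Iic, compl_Iic,
    measureReal_withDensity_Ioi hf hf0]

theorem integral_id_withDensity_eq_integral_survival (hf : Integrable f) (hf0 : 0 ≤ f)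
    (hint : Integrable (fun x => x) (volume.withDensity fun x => ENNReal.ofReal (f x)))
    (hae : 0 ≤ᵐ[volume.withDensity fun x => ENNReal.ofReal (f x)] fun x => x) :
    ∫ x, x ∂(volume.withDensity fun x => ENNReal.ofReal (f x)) = ∫ t in Ioi 0, survival f t := by
  rw [hint.integral_eq_integral_meas_lt hae]
  exact setIntegral_congr_fun measurableSet_Ioi fun t _ => measureReal_withDensity_Ioi hf hf0 t

end Density

theorem stmt18_general (l : ℝ) (hl : l ∈ Set.Ioo (0 : ℝ) 1)
    (D : Set ℝ) (hD0 : D ⊆ Set.Ici 0) (hDconn : D.OrdConnected)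
    (f : ℝ → ℝ) (hf : Measurable f) (hfpos : ∀ x ∈ D, 0 < f x) (hfzero : ∀ x ∉ D, f x = 0)
    (G : Measure ℝ) (hG : G = MeasureTheory.volume.withDensity fun x => ENNReal.ofReal (f x))
    (hGprob : IsProbabilityMeasure G)
    (μ : ℝ) (hint : Integrable (fun x => x) G) (hmean : ∫ x, x ∂G = μ)
    (hreg : ∀ x ∈ D, ∀ y ∈ D, x ≤ y →
      l * x - (1 - (G (Set.Iic x)).toReal) / f x ≤
        l * y - (1 - (G (Set.Iic y)).toReal) / f y) :
    opt G ≤ (1 - l) ^ (-(1 / l)) * (μ * (G (Set.Ici μ)).toReal) := by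
  obtain ⟨hl0, hl1⟩ := hl
  subst hG
  have hf0 : 0 ≤ f := fun x => by
    by_cases hx : x ∈ D
    exacts [(hfpos x hx).le, (hfzero x hx).ge]
  have hfint := integrable_of_isProbabilityMeasure_withDensity hf hf0
  have hGD := withDensity_ofReal_compl_eq_zero hf hfzero
  have hae : 0 ≤ᵐ[_] fun x => x := measure_mono_null (fun x hx hxD => hx (hD0 hxD)) hGD
  have hS0 : survival f 0 = 1 := by
    rw [← measureReal_withDensity_Ici hfint hf0, measureReal_def,
      (prob_compl_eq_zero_iff (s := Ici (0 : ℝ)) measurableSet_Ici).1 hae, ENNReal.toReal_one]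
  have hSμ : 0 < survival f μ := by
    rw [← measureReal_withDensity_Ici hfint hf0, ← hmean]
    exact ENNReal.toReal_pos (measure_integral_le_pos hint).ne' (measure_ne_top _ _)
  have hreg' : MonotoneOn (virtualValue l f) D := fun x hx y hy hxy => by
    simpa only [virtualValue, one_sub_toReal_withDensity_Iic hfint hf0] using hreg x hx y hy hxy
  have key := one_sub_rpow_le_survival_of_monotoneOn hl0 hl1 hfint hf0 hDconn hfpos hfzero hreg'
    (hmean ▸ integral_id_mem_of_ordConnected hint hDconn hGD) hSμ hS0
    (hmean ▸ integral_id_withDensity_eq_integral_survival hfint hf0 hint hae).symm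
  have hμ0 : 0 ≤ μ := hmean ▸ integral_nonneg_of_ae hae
  calc opt _ ≤ μ := hmean ▸ opt_le_integral hint hae
    _ ≤ (1 - l) ^ (-(1 / l)) * (μ * survival f μ) := by
      rw [Real.rpow_neg (by linarith), ← div_eq_inv_mul, le_div_iff₀ (by positivity)]
      nlinarith [mul_le_mul_of_nonneg_left key hμ0]
    _ = _ := by rw [← measureReal_withDensity_Ici hfint hf0]; rfl

/-- Let `λ ∈ (0,1)` and let `G` be a continuous probability distribution
supported on an interval `D ⊆ [0,∞)` with density `f` positive on `D`, finite mean `μ`, and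
nondecreasing `λ`-generalized virtual valuation `φ_λ(x) = λx − (1−F(x))/f(x)` on `D`
(`λ`-regularity). Then posting the mean as a price is a `(1−λ)^{−1/λ}`-approximation to the
optimal revenue: `OPT(G) ≤ (1−λ)^{−1/λ} · μ · P_{X∼G}(X ≥ μ)`. -/
theorem stmt18 (l : ℝ) (hl : l ∈ Set.Ioo (0 : ℝ) 1)
    (D : Set ℝ) (hDmeas : MeasurableSet D) (hD0 : D ⊆ Set.Ici 0) (hDconn : D.OrdConnected)
    (f : ℝ → ℝ) (hf : Measurable f) (hfpos : ∀ x ∈ D, 0 < f x) (hfzero : ∀ x ∉ D, f x = 0)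
    (G : Measure ℝ) (hG : G = MeasureTheory.volume.withDensity fun x => ENNReal.ofReal (f x))
    (hGprob : IsProbabilityMeasure G)
    (μ : ℝ) (hint : Integrable (fun x => x) G) (hmean : ∫ x, x ∂G = μ)
    (hreg : ∀ x ∈ D, ∀ y ∈ D, x ≤ y →
      l * x - (1 - (G (Set.Iic x)).toReal) / f x ≤
        l * y - (1 - (G (Set.Iic y)).toReal) / f y) :
    opt G ≤ (1 - l) ^ (-(1 / l)) * (μ * (G (Set.Ici μ)).toReal) :=
  stmt18_general l hl D hD0 hDconn f hf hfpos hfzero G hG hGprob μ hint hmean hreg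
end

section
/- Let r > 0, let k be the unique positive real solution of 1/r = (3k + k³)/2, and set ρ̃ = 1/(1 − (3/2)·r·k). Then: (i) ρ̃ is the unique solution in [1,∞) of the equation (27/4)·r² = (ρ̃−1)³/ρ̃²; (ii) 1 + (27/4)·r² ≤ ρ̃ ≤ 3 + (27/4)·r²; and (iii) for any μ > 0 with σ = r·μ, the price p = μ − kσ satisfies p = ((ρ̃+2)/(3ρ̃))·μ. -/
/-! Writing `k` for the price parameter, the defining equation says `r k (3 + k²) = 2`, and then
`ρ̃ = (3 + k²) / k² = 1 + 3 / k²`. Everything is a rational identity in `k` once `ρ̃` is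
written this way; uniqueness in (i) holds because `x ↦ (x - 1)³ / x²` is strictly increasing on
`[1, ∞)`, and (ii) comes from `x - 3 ≤ (x - 1)³ / x² ≤ x - 1`. -/

open Set

theorem strictMonoOn_sub_one_pow_three_div_sq :
    StrictMonoOn (fun x : ℝ => (x - 1) ^ 3 / x ^ 2) (Ici 1) := by
  intro x hx y hy hxy
  simp only [mem_Ici] at hx hy
  rw [div_lt_div_iff₀ (by positivity) (by positivity)]
  have ha : 0 ≤ x - 1 := sub_nonneg.2 hx
  have hd : 0 < y - x := sub_pos.2 hxy
  nlinarith [mul_nonneg ha ha, mul_pos hd hd, mul_nonneg (mul_nonneg ha ha) hd.le, pow_pos hd 3]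

theorem sub_one_pow_three_div_sq_le {x : ℝ} (hx : 1 ≤ x) : (x - 1) ^ 3 / x ^ 2 ≤ x - 1 := by
  rw [div_le_iff₀ (by positivity)]
  nlinarith [mul_nonneg (sub_nonneg.2 hx) (sub_nonneg.2 hx)]

theorem sub_three_le_sub_one_pow_three_div_sq {x : ℝ} (hx : 1 / 3 ≤ x) :
    x - 3 ≤ (x - 1) ^ 3 / x ^ 2 := by
  rw [le_div_iff₀ (by positivity)]
  nlinarith

section PriceParameter

variable {r k : ℝ}

theorem mul_mul_three_add_sq_eq_two (hr : r ≠ 0) (hkeq : 1 / r = (3 * k + k ^ 3) / 2) :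
    r * k * (3 + k ^ 2) = 2 := by
  field_simp at hkeq
  linear_combination -hkeq

theorem one_div_one_sub_eq_one_add_three_div_sq (hk : k ≠ 0) (hrk : r * k * (3 + k ^ 2) = 2) :
    1 / (1 - (3 / 2) * r * k) = 1 + 3 / k ^ 2 := by
  have hsub : 1 - (3 / 2) * r * k = k ^ 2 / (3 + k ^ 2) := by
    field_simp
    linear_combination -3 * hrk
  rw [hsub]
  field_simp
  ring

theorem sq_mul_eq_sub_one_pow_three_div_sq (hk : k ≠ 0) (hrk : r * k * (3 + k ^ 2) = 2) :
    (27 / 4) * r ^ 2 = ((1 + 3 / k ^ 2) - 1) ^ 3 / (1 + 3 / k ^ 2) ^ 2 := by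
  field_simp
  linear_combination (27 * (r * k * (3 + k ^ 2) + 2)) * hrk

theorem price_eq_add_two_div_three_mul (hk : k ≠ 0) (hrk : r * k * (3 + k ^ 2) = 2) (μ : ℝ) :
    μ - k * (r * μ) = ((1 + 3 / k ^ 2) + 2) / (3 * (1 + 3 / k ^ 2)) * μ := by
  field_simp
  linear_combination -3 * μ * hrk

end PriceParameter

/-- Let `r > 0`, let `k` be the unique positive real solution of
`1/r = (3k + k³)/2`, and set `ρ̃ = 1/(1 − (3/2)·r·k)`. Then:
(i) `ρ̃` is the unique solution in `[1,∞)` of `(27/4)·r² = (ρ̃−1)³/ρ̃²`;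
(ii) `1 + (27/4)·r² ≤ ρ̃ ≤ 3 + (27/4)·r²`;
(iii) for any `μ > 0` with `σ = r·μ`, the price `p = μ − kσ` satisfies
`p = ((ρ̃+2)/(3ρ̃))·μ`. -/
theorem stmt19 (r : ℝ) (hr : 0 < r) (k : ℝ) (hk : 0 < k)
    (hkeq : 1 / r = (3 * k + k ^ 3) / 2)
    (ρ : ℝ) (hρ : ρ = 1 / (1 - (3 / 2) * r * k)) :
    (1 ≤ ρ ∧ (27 / 4) * r ^ 2 = (ρ - 1) ^ 3 / ρ ^ 2 ∧
      ∀ ρ' : ℝ, 1 ≤ ρ' → (27 / 4) * r ^ 2 = (ρ' - 1) ^ 3 / ρ' ^ 2 → ρ' = ρ) ∧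
    (1 + (27 / 4) * r ^ 2 ≤ ρ ∧ ρ ≤ 3 + (27 / 4) * r ^ 2) ∧
    ∀ μ : ℝ, 0 < μ → μ - k * (r * μ) = ((ρ + 2) / (3 * ρ)) * μ := by
  have hrk := mul_mul_three_add_sq_eq_two hr.ne' hkeq
  obtain rfl : ρ = 1 + 3 / k ^ 2 := hρ.trans (one_div_one_sub_eq_one_add_three_div_sq hk.ne' hrk)
  have hρ : 1 ≤ 1 + 3 / k ^ 2 := le_add_of_nonneg_right (by positivity)
  have hρr := sq_mul_eq_sub_one_pow_three_div_sq hk.ne' hrk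
  refine ⟨⟨hρ, hρr, fun ρ' hρ' hρ'r ↦ ?_⟩, ⟨?_, ?_⟩, fun μ _ ↦ price_eq_add_two_div_three_mul hk.ne' hrk μ⟩
  · exact strictMonoOn_sub_one_pow_three_div_sq.injOn hρ' hρ (hρ'r.symm.trans hρr)
  · linarith [sub_one_pow_three_div_sq_le hρ]
  · linarith [sub_three_le_sub_one_pow_three_div_sq (x := 1 + 3 / k ^ 2) (by linarith)]
end
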